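/- Let m_j ∈ (0,1) with m_j → 0, and define k_j(s) = 2K(m_j) cn(jK(m_j)s, m_j) for s ∈ [0,1], where additionally m_j = 1/j². Then k_j converges weakly to 0 in L²((0,1)): for every g ∈ L²((0,1)), ∫₀¹ k_j(s) g(s) ds → 0, while ∫₀¹ k_j(s)² ds → π²/2 ≠ 0. -/

import Mathlib

/-! `k_j = 2K cn(jK ·)` is uniformly bounded, and since `cn` has mean zero over its period `4K`,
which `s ↦ jKs` runs through about `j/4` times on `[0, 1]`, the primitive of `k_j` is `O(1/j)`
uniformly. Integrating by parts, `∫₀¹ k_j φ → 0` for every smooth `φ`, and smooth functions are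
dense in `L¹(0, 1) ⊇ L²(0, 1)`.

For the energy, a periodic function sampled at a frequency tending to infinity averages to its
mean over a period, so `∫₀¹ cn(jKs)² ds` is close to `(4K)⁻¹ ∫₀^{4K} cn²`, which tends to
`(2π)⁻¹ ∫₀^{2π} cos² = 1/2` by dominated convergence; hence `∫₀¹ k_j² = 4K² · ∫₀¹ cn(jKs)² ds`
tends to `π²/2`. -/

open MeasureTheory intervalIntegral Set Real Filter Topology
open scoped ContDiff Interval

theorem abs_intervalIntegral_le_mul_abs {h : ℝ → ℝ} {M : ℝ} (hM : ∀ x, |h x| ≤ M) (a b : ℝ) :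
    |∫ x in a..b, h x| ≤ M * |b - a| := by
  simpa only [Real.norm_eq_abs] using
    norm_integral_le_of_norm_le_const (f := h) fun x _ => (Real.norm_eq_abs (h x)).trans_le (hM x)

namespace Function.Periodic

variable {h : ℝ → ℝ} {T M : ℝ}

theorem abs_intervalIntegral_sub_mul_le (hper : Periodic h T) (hT : 0 < T)
    (hcont : Continuous h) (hM : ∀ x, |h x| ≤ M) (L : ℝ) :
    |(∫ x in 0..L, h x) - L / T * ∫ x in 0..T, h x| ≤ 2 * M * T := by
  have hint : ∀ t₁ t₂ : ℝ, IntervalIntegrable h volume t₁ t₂ := fun _ _ =>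
    hcont.intervalIntegrable _ _
  set n := ⌊L / T⌋
  have hsplit : ∫ x in 0..L, h x = n * (∫ x in 0..T, h x) + ∫ x in n * T..L, h x := by
    have hn := hper.intervalIntegral_add_zsmul_eq n 0 hint
    simp only [zero_add, zsmul_eq_mul] at hn
    rw [← integral_add_adjacent_intervals (hint 0 (n * T)) (hint _ L), hn]
  have hfract : L / T - n = Int.fract (L / T) := rfl
  have hrem : |∫ x in n * T..L, h x| ≤ M * T := by
    have hL : L - n * T = T * Int.fract (L / T) := by
      rw [← hfract]; field_simp
    refine (abs_intervalIntegral_le_mul_abs hM _ _).trans ?_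
    have hM0 : 0 ≤ M := (abs_nonneg _).trans (hM 0)
    rw [hL, abs_of_nonneg (mul_nonneg hT.le (Int.fract_nonneg _))]
    exact mul_le_mul_of_nonneg_left (mul_le_of_le_one_right hT.le (Int.fract_lt_one _).le) hM0
  have hperiod : |∫ x in 0..T, h x| ≤ M * T := by
    simpa [abs_of_pos hT] using abs_intervalIntegral_le_mul_abs hM 0 T
  calc |(∫ x in 0..L, h x) - L / T * ∫ x in 0..T, h x|
      = |(∫ x in n * T..L, h x) - Int.fract (L / T) * ∫ x in 0..T, h x| := by
        rw [hsplit, ← hfract]; ring_nf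
    _ ≤ |∫ x in n * T..L, h x| + Int.fract (L / T) * |∫ x in 0..T, h x| := by
        refine (abs_sub _ _).trans_eq ?_
        rw [abs_mul, abs_of_nonneg (Int.fract_nonneg (L / T))]
    _ ≤ M * T + 1 * (M * T) := by
        gcongr
        exact (Int.fract_lt_one _).le
    _ = 2 * M * T := by ring

theorem abs_intervalIntegral_comp_mul_sub_le (hper : Periodic h T) (hT : 0 < T)
    (hcont : Continuous h) (hM : ∀ x, |h x| ≤ M) {c : ℝ} (hc : 0 < c) (x : ℝ) :
    |(∫ s in 0..x, h (c * s)) - x / T * ∫ u in 0..T, h u| ≤ 2 * M * T / c := by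
  have hscale : (∫ s in 0..x, h (c * s)) - x / T * ∫ u in 0..T, h u
      = c⁻¹ * ((∫ u in 0..c * x, h u) - c * x / T * ∫ u in 0..T, h u) := by
    rw [integral_comp_mul_left h hc.ne', mul_zero, smul_eq_mul]
    field_simp
  rw [hscale, abs_mul, abs_inv, abs_of_pos hc, inv_mul_eq_div]
  gcongr
  exact hper.abs_intervalIntegral_sub_mul_le hT hcont hM _

theorem abs_intervalIntegral_comp_mul_le (hper : Periodic h T) (hT : 0 < T)
    (hcont : Continuous h) (hM : ∀ x, |h x| ≤ M) (hmean : ∫ u in 0..T, h u = 0) {c : ℝ}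
    (hc : 0 < c) (a b : ℝ) : |∫ s in a..b, h (c * s)| ≤ 4 * M * T / c := by
  have hbound : ∀ x, |∫ s in 0..x, h (c * s)| ≤ 2 * M * T / c := fun x => by
    simpa [hmean] using hper.abs_intervalIntegral_comp_mul_sub_le hT hcont hM hc x
  have hint : ∀ x, IntervalIntegrable (fun s => h (c * s)) volume 0 x := fun x =>
    (hcont.comp (continuous_const_mul c)).intervalIntegrable _ _
  rw [← integral_interval_sub_left (hint b) (hint a)]
  calc _ ≤ |∫ s in 0..b, h (c * s)| + |∫ s in 0..a, h (c * s)| := abs_sub _ _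
    _ ≤ 2 * M * T / c + 2 * M * T / c := add_le_add (hbound b) (hbound a)
    _ = 4 * M * T / c := by ring

end Function.Periodic

theorem IntervalIntegrable.exists_contDiff_setIntegral_norm_sub_le {g : ℝ → ℝ} {a b : ℝ}
    (hg : IntervalIntegrable g volume a b) {δ : ℝ} (hδ : 0 < δ) :
    ∃ ψ : ℝ → ℝ, ContDiff ℝ ∞ ψ ∧ ∫ x in Ι a b, ‖g x - ψ x‖ ≤ δ := by
  have hg' : Integrable ((Ι a b).indicator g) :=
    (integrable_indicator_iff measurableSet_uIoc).2 (intervalIntegrable_iff.1 hg)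
  obtain ⟨φ, hφ_supp, hφ_dist, hφ_cont, hφ_int⟩ :=
    hg'.exists_hasCompactSupport_integral_sub_le (half_pos hδ)
  set η := δ / 2 / (|b - a| + 1)
  have hη : 0 < η := by positivity
  obtain ⟨ψ, hψ, hψφ⟩ :=
    (hφ_supp.uniformContinuous_of_continuous hφ_cont).exists_contDiff_dist_le hη
  refine ⟨ψ, hψ, ?_⟩
  have hfin : volume (Ι a b) ≠ ⊤ := by rw [Real.volume_uIoc]; exact ENNReal.ofReal_ne_top
  have hdist : Integrable (fun x => ‖(Ι a b).indicator g x - φ x‖) := (hg'.sub hφ_int).norm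
  have hmajor : Integrable (fun x => ‖(Ι a b).indicator g x - φ x‖ + η) (volume.restrict (Ι a b)) :=
    hdist.integrableOn.add (integrableOn_const hfin)
  calc ∫ x in Ι a b, ‖g x - ψ x‖
      ≤ ∫ x in Ι a b, (‖(Ι a b).indicator g x - φ x‖ + η) := by
        refine integral_mono_of_nonneg (.of_forall fun _ => norm_nonneg _) hmajor ?_
        filter_upwards [ae_restrict_mem measurableSet_uIoc] with x hx
        rw [indicator_of_mem hx]
        calc ‖g x - ψ x‖ ≤ ‖g x - φ x‖ + ‖φ x - ψ x‖ := norm_sub_le_norm_sub_add_norm_sub _ _ _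
          _ ≤ ‖g x - φ x‖ + η := by
            gcongr
            rw [← dist_eq_norm, dist_comm]
            exact (hψφ x).le
    _ = (∫ x in Ι a b, ‖(Ι a b).indicator g x - φ x‖) + |b - a| * η := by
        rw [MeasureTheory.integral_add hdist.integrableOn (integrableOn_const hfin),
          setIntegral_const, Measure.real, Real.volume_uIoc, ENNReal.toReal_ofReal (abs_nonneg _),
          smul_eq_mul]
    _ ≤ δ / 2 + δ / 2 := by
        gcongr
        · exact (setIntegral_le_integral hdist
            (.of_forall fun _ => norm_nonneg _)).trans hφ_dist
        · rw [mul_div_left_comm]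
          exact mul_le_of_le_one_right (half_pos hδ).le
            ((div_le_one (by positivity)).2 (by linarith))
    _ = δ := add_halves δ

section Oscillation

variable {ι : Type*} {l : Filter ι} {f : ι → ℝ → ℝ} {ε : ι → ℝ} {a b : ℝ}

theorem tendsto_intervalIntegral_mul_of_contDiff {φ : ℝ → ℝ} (hφ : ContDiff ℝ 1 φ)
    (hf : ∀ᶠ i in l, Continuous (f i))
    (hprim : ∀ᶠ i in l, ∀ x ∈ uIcc a b, |∫ s in a..x, f i s| ≤ ε i)
    (hε : Tendsto ε l (𝓝 0)) :
    Tendsto (fun i => ∫ s in a..b, f i s * φ s) l (𝓝 0) := by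
  have hφ' : Continuous (deriv φ) := hφ.continuous_deriv le_rfl
  obtain ⟨C, hC⟩ := (isCompact_uIcc (a := a) (b := b)).exists_bound_of_continuousOn hφ'.continuousOn
  have hlim : Tendsto (fun i => (|φ b| + C * |b - a|) * ε i) l (𝓝 0) := by
    simpa using hε.const_mul (|φ b| + C * |b - a|)
  refine squeeze_zero_norm' ?_ hlim
  filter_upwards [hf, hprim] with i hfi hpi
  set F := fun x => ∫ s in a..x, f i s
  have hF : ∀ x ∈ uIcc a b, HasDerivAt F (f i x) x := fun x _ =>
    integral_hasDerivAt_right (hfi.intervalIntegrable _ _) (hfi.stronglyMeasurableAtFilter _ _)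
      hfi.continuousAt
  have hparts := intervalIntegral.integral_mul_deriv_eq_deriv_mul
    (fun x _ => ((hφ.differentiable one_ne_zero) x).hasDerivAt) hF
    (hφ'.intervalIntegrable _ _) (hfi.intervalIntegrable _ _)
  have hFa : F a = 0 := integral_same
  have hrest : |∫ x in a..b, deriv φ x * F x| ≤ C * ε i * |b - a| := by
    simpa only [Real.norm_eq_abs] using intervalIntegral.norm_integral_le_of_norm_le_const
      (f := fun x => deriv φ x * F x) fun x hx => by
      rw [norm_mul, Real.norm_eq_abs (F x)]
      exact mul_le_mul (hC x (uIoc_subset_uIcc hx)) (hpi x (uIoc_subset_uIcc hx)) (abs_nonneg _)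
        ((norm_nonneg _).trans (hC x (uIoc_subset_uIcc hx)))
  have hibp : ∫ s in a..b, f i s * φ s = φ b * F b - ∫ x in a..b, deriv φ x * F x := by
    rw [integral_congr fun s _ => mul_comm (f i s) (φ s), hparts, hFa, mul_zero, sub_zero]
  calc ‖∫ s in a..b, f i s * φ s‖ = |φ b * F b - ∫ x in a..b, deriv φ x * F x| := by
        rw [Real.norm_eq_abs, hibp]
    _ ≤ |φ b| * ε i + C * ε i * |b - a| := by
        refine (abs_sub _ _).trans (add_le_add ?_ hrest)
        rw [abs_mul]
        exact mul_le_mul_of_nonneg_left (hpi b right_mem_uIcc) (abs_nonneg _)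
    _ = (|φ b| + C * |b - a|) * ε i := by ring

theorem tendsto_intervalIntegral_mul_of_tendsto_primitive {M : ℝ}
    (hf : ∀ᶠ i in l, Continuous (f i)) (hM : ∀ᶠ i in l, ∀ x, |f i x| ≤ M)
    (hprim : ∀ᶠ i in l, ∀ x ∈ uIcc a b, |∫ s in a..x, f i s| ≤ ε i)
    (hε : Tendsto ε l (𝓝 0)) {g : ℝ → ℝ} (hg : IntervalIntegrable g volume a b) :
    Tendsto (fun i => ∫ s in a..b, f i s * g s) l (𝓝 0) := by
  rw [Metric.tendsto_nhds]
  intro δ hδ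
  obtain ⟨ψ, hψ, hgψ⟩ := hg.exists_contDiff_setIntegral_norm_sub_le
    (show 0 < δ / 2 / (|M| + 1) by positivity)
  have hψlim := tendsto_intervalIntegral_mul_of_contDiff (hψ.of_le (by norm_num)) hf hprim hε
  filter_upwards [hf, hM, Metric.tendsto_nhds.1 hψlim (δ / 2) (half_pos hδ)] with i hfi hMi hψi
  have hψint : IntervalIntegrable ψ volume a b := hψ.continuous.intervalIntegrable _ _
  have hsplit : ∫ s in a..b, f i s * g s
      = (∫ s in a..b, f i s * (g s - ψ s)) + ∫ s in a..b, f i s * ψ s := by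
    rw [← integral_add ((hg.sub hψint).continuousOn_mul hfi.continuousOn)
      (hψint.continuousOn_mul hfi.continuousOn)]
    congr 1; ext s; ring
  have hM0 : 0 ≤ M := (abs_nonneg _).trans (hMi a)
  have happrox : |∫ s in a..b, f i s * (g s - ψ s)| ≤ M * (δ / 2 / (|M| + 1)) := by
    calc |∫ s in a..b, f i s * (g s - ψ s)| ≤ ∫ s in Ι a b, ‖f i s * (g s - ψ s)‖ :=
          (Real.norm_eq_abs _).symm.trans_le norm_integral_le_integral_norm_uIoc
      _ ≤ ∫ s in Ι a b, M * ‖g s - ψ s‖ := by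
          refine integral_mono_of_nonneg (.of_forall fun _ => norm_nonneg _)
            ((intervalIntegrable_iff.1 (hg.sub hψint)).norm.const_mul M) (.of_forall fun s => ?_)
          dsimp only
          rw [norm_mul, Real.norm_eq_abs (f i s)]
          exact mul_le_mul_of_nonneg_right (hMi s) (norm_nonneg _)
      _ ≤ M * (δ / 2 / (|M| + 1)) := by
          rw [MeasureTheory.integral_const_mul]; exact mul_le_mul_of_nonneg_left hgψ hM0
  have hsmall : M * (δ / 2 / (|M| + 1)) < δ / 2 := by
    rw [mul_div_left_comm]
    exact mul_lt_of_lt_one_right (half_pos hδ)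
      ((div_lt_one (by positivity)).2 (by linarith [le_abs_self M]))
  rw [Real.dist_eq, sub_zero, hsplit]
  rw [Real.dist_eq, sub_zero] at hψi
  calc _ ≤ |∫ s in a..b, f i s * (g s - ψ s)| + |∫ s in a..b, f i s * ψ s| := abs_add_le _ _
    _ < δ / 2 + δ / 2 := add_lt_add_of_le_of_lt (happrox.trans hsmall.le) hψi
    _ = δ := add_halves δ

theorem tendsto_intervalIntegral_of_tendsto_of_tendsto_endpoint [l.IsCountablyGenerated]
    {F : ι → ℝ → ℝ} {F₀ : ℝ → ℝ} {M : ℝ} {b' : ι → ℝ}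
    (hF : ∀ᶠ i in l, Continuous (F i)) (hM : ∀ᶠ i in l, ∀ x, |F i x| ≤ M)
    (hlim : ∀ x, Tendsto (fun i => F i x) l (𝓝 (F₀ x))) (hb : Tendsto b' l (𝓝 b)) :
    Tendsto (fun i => ∫ x in a..b' i, F i x) l (𝓝 (∫ x in a..b, F₀ x)) := by
  have hfixed : Tendsto (fun i => ∫ x in a..b, F i x) l (𝓝 (∫ x in a..b, F₀ x)) :=
    tendsto_integral_filter_of_dominated_convergence (fun _ => M)
      (hF.mono fun i hi => hi.aestronglyMeasurable)
      (hM.mono fun i hi => .of_forall fun x _ => (Real.norm_eq_abs _).trans_le (hi x))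
      intervalIntegrable_const (.of_forall fun x _ => hlim x)
  have htail : Tendsto (fun i => ∫ x in b..b' i, F i x) l (𝓝 0) := by
    refine squeeze_zero_norm' ?_ (by simpa using (hb.sub_const b).abs.const_mul M)
    filter_upwards [hM] with i hi using abs_intervalIntegral_le_mul_abs hi b (b' i)
  refine (by simpa using hfixed.add htail : Tendsto _ l _).congr' ?_
  filter_upwards [hF] with i hi using
    integral_add_adjacent_intervals (hi.intervalIntegrable _ _) (hi.intervalIntegrable _ _)

theorem tendsto_intervalIntegral_comp_mul_of_periodic [l.IsCountablyGenerated]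
    {h : ι → ℝ → ℝ} {h₀ : ℝ → ℝ} {T c : ι → ℝ} {T₀ M : ℝ}
    (hT₀ : 0 < T₀) (hT : Tendsto T l (𝓝 T₀)) (hc : Tendsto c l atTop)
    (hper : ∀ᶠ i in l, Function.Periodic (h i) (T i)) (hcont : ∀ᶠ i in l, Continuous (h i))
    (hM : ∀ᶠ i in l, ∀ x, |h i x| ≤ M) (hlim : ∀ x, Tendsto (fun i => h i x) l (𝓝 (h₀ x))) :
    Tendsto (fun i => ∫ s in 0..1, h i (c i * s)) l (𝓝 (1 / T₀ * ∫ x in 0..T₀, h₀ x)) := by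
  have hmean : Tendsto (fun i => 1 / T i * ∫ x in 0..T i, h i x) l
      (𝓝 (1 / T₀ * ∫ x in 0..T₀, h₀ x)) :=
    (tendsto_const_nhds.div hT hT₀.ne').mul
      (tendsto_intervalIntegral_of_tendsto_of_tendsto_endpoint hcont hM hlim hT)
  have herr : Tendsto (fun i => 2 * M * T i / c i) l (𝓝 0) :=
    (hT.const_mul (2 * M)).div_atTop hc
  refine hmean.congr_dist (squeeze_zero' (.of_forall fun _ => dist_nonneg) ?_ herr)
  filter_upwards [hper, hcont, hM, hT.eventually (lt_mem_nhds hT₀),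
    hc.eventually (eventually_gt_atTop 0)] with i hpi hci hMi hTi hci_pos
  rw [dist_comm, Real.dist_eq]
  exact hpi.abs_intervalIntegral_comp_mul_sub_le hTi hci hMi hci_pos 1

theorem tendsto_intervalIntegral_mul_comp_mul_mul_of_periodic {h : ι → ℝ → ℝ} {A T c : ι → ℝ}
    {A₀ T₀ M : ℝ} {g : ℝ → ℝ}
    (hA : Tendsto A l (𝓝 A₀)) (hT₀ : 0 < T₀) (hT : Tendsto T l (𝓝 T₀))
    (hc : Tendsto c l atTop) (hper : ∀ᶠ i in l, Function.Periodic (h i) (T i))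
    (hcont : ∀ᶠ i in l, Continuous (h i)) (hM : ∀ᶠ i in l, ∀ x, |h i x| ≤ M)
    (hmean : ∀ᶠ i in l, ∫ x in 0..T i, h i x = 0) (hg : IntervalIntegrable g volume a b) :
    Tendsto (fun i => ∫ s in a..b, A i * h i (c i * s) * g s) l (𝓝 0) := by
  refine tendsto_intervalIntegral_mul_of_tendsto_primitive (M := (|A₀| + 1) * M)
    (ε := fun i => |A i| * (4 * M * T i / c i)) ?_ ?_ ?_ ?_ hg
  · filter_upwards [hcont] with i hi
    exact continuous_const.mul (hi.comp (continuous_const_mul _))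
  · filter_upwards [hM, hA.abs.eventually (gt_mem_nhds (lt_add_one |A₀|))] with i hMi hAi x
    rw [abs_mul]
    exact mul_le_mul hAi.le (hMi _) (abs_nonneg _) (by positivity)
  · filter_upwards [hper, hcont, hM, hmean, hT.eventually (lt_mem_nhds hT₀),
      hc.eventually (eventually_gt_atTop 0)] with i hpi hci hMi hmi hTi hci_pos x _
    rw [intervalIntegral.integral_const_mul, abs_mul]
    exact mul_le_mul_of_nonneg_left
      (hpi.abs_intervalIntegral_comp_mul_le hTi hci hMi hmi hci_pos a x) (abs_nonneg _)
  · simpa using hA.abs.mul ((hT.const_mul (4 * M)).div_atTop hc)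

end Oscillation

theorem tendsto_one_div_natCast_sq_nhdsGT_zero :
    Tendsto (fun j : ℕ => 1 / (j : ℝ) ^ 2) atTop (𝓝[>] 0) := by
  refine tendsto_nhdsWithin_iff.2 ⟨?_, ?_⟩
  · simpa using (tendsto_one_div_atTop_nhds_zero_nat (𝕜 := ℝ)).pow 2
  · filter_upwards [eventually_ge_atTop 1] with j hj
    rw [mem_Ioi]; positivity

theorem stmt_17_general (cn : ℝ → ℝ → ℝ) (K : ℝ → ℝ)
    (hK_lim : Tendsto K (𝓝[>] (0:ℝ)) (𝓝 (π/2)))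
    (hcn_cont : ∀ m ∈ Ico (0:ℝ) 1, Continuous (fun u => cn u m))
    (hcn_bdd : ∀ u : ℝ, ∀ m ∈ Ico (0:ℝ) 1, |cn u m| ≤ 1)
    (hcn_per : ∀ m ∈ Ico (0:ℝ) 1, Function.Periodic (fun u => cn u m) (4 * K m))
    (hcn_mean : ∀ m ∈ Ico (0:ℝ) 1, ∫ u in (0:ℝ)..(4 * K m), cn u m = 0)
    (hcn_lim : ∀ u : ℝ, Tendsto (fun m => cn u m) (𝓝[>] (0:ℝ)) (𝓝 (Real.cos u)))
    (m : ℕ → ℝ) (hm : ∀ j : ℕ, m j = 1 / (j:ℝ)^2)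
    (k : ℕ → ℝ → ℝ)
    (hk : ∀ j : ℕ, ∀ s : ℝ, k j s = 2 * K (m j) * cn ((j:ℝ) * K (m j) * s) (m j)) :
    (∀ g : ℝ → ℝ, MeasureTheory.MemLp g 2 (MeasureTheory.volume.restrict (Ioo (0:ℝ) 1)) →
      Tendsto (fun j : ℕ => ∫ s in (0:ℝ)..1, k j s * g s) atTop (𝓝 0)) ∧
    Tendsto (fun j : ℕ => ∫ s in (0:ℝ)..1, (k j s)^2) atTop (𝓝 (π^2 / 2)) ∧
    (π^2 / 2 : ℝ) ≠ 0 := by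
  have hm_lim : Tendsto m atTop (𝓝[>] 0) := by
    simpa only [← funext hm] using tendsto_one_div_natCast_sq_nhdsGT_zero
  have hm_mem : ∀ᶠ j in atTop, m j ∈ Ico (0:ℝ) 1 :=
    (hm_lim.eventually (Ioo_mem_nhdsGT one_pos)).mono fun _ h => Ioo_subset_Ico_self h
  have hK : Tendsto (fun j => K (m j)) atTop (𝓝 (π / 2)) := hK_lim.comp hm_lim
  have hT : Tendsto (fun j => 4 * K (m j)) atTop (𝓝 (2 * π)) := by
    convert hK.const_mul 4 using 2; ring
  have hc : Tendsto (fun j : ℕ => j * K (m j)) atTop atTop :=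
    tendsto_natCast_atTop_atTop.atTop_mul_pos (by positivity) hK
  have hper := hm_mem.mono fun j hj => hcn_per _ hj
  have hcont := hm_mem.mono fun j hj => hcn_cont _ hj
  have hbdd := hm_mem.mono fun j hj u => hcn_bdd u _ hj
  refine ⟨fun g hg => ?_, ?_, by positivity⟩
  · simp_rw [hk]
    exact tendsto_intervalIntegral_mul_comp_mul_mul_of_periodic (hK.const_mul 2) (by positivity)
      hT hc hper hcont hbdd (hm_mem.mono fun j hj => hcn_mean _ hj)
      ((intervalIntegrable_iff_integrableOn_Ioo_of_le zero_le_one).2 (hg.integrable one_le_two))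
  · have hsq : ∀ j, ∫ s in 0..1, k j s ^ 2
        = 4 * K (m j) ^ 2 * ∫ s in 0..1, cn (j * K (m j) * s) (m j) ^ 2 := fun j => by
      rw [← intervalIntegral.integral_const_mul]
      exact integral_congr fun s _ => by rw [hk]; ring
    have havg := tendsto_intervalIntegral_comp_mul_of_periodic (h := fun j u => cn u (m j) ^ 2)
      (M := 1) (by positivity) hT hc (hper.mono fun j hj => hj.comp (· ^ 2))
      (hcont.mono fun j hj => hj.pow 2)
      (hbdd.mono fun j hj u => by rw [abs_pow]; exact pow_le_one₀ (abs_nonneg _) (hj u))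
      (fun u => ((hcn_lim u).comp hm_lim).pow 2)
    simp_rw [hsq]
    convert ((hK.pow 2).const_mul 4).mul havg using 2
    rw [integral_cos_sq, cos_two_pi, sin_two_pi, cos_zero, sin_zero]
    field_simp
    ring

/-- The curvatures k_j(s) = 2K(m_j) cn(jK(m_j)s, m_j) with m_j = 1/j² converge
weakly to 0 in L²((0,1)) while ∫₀¹ k_j² → π²/2 ≠ 0. Here cn is the Jacobi
elliptic cosine and K the complete elliptic integral of the first kind,
characterized by the listed hypotheses. -/
theorem stmt_17 (cn : ℝ → ℝ → ℝ) (K : ℝ → ℝ)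
    (hK_pos : ∀ m ∈ Ico (0:ℝ) 1, π/2 ≤ K m)
    (hK_lim : Tendsto K (𝓝[>] (0:ℝ)) (𝓝 (π/2)))
    (hcn_cont : ∀ m ∈ Ico (0:ℝ) 1, Continuous (fun u => cn u m))
    (hcn_bdd : ∀ u : ℝ, ∀ m ∈ Ico (0:ℝ) 1, |cn u m| ≤ 1)
    (hcn_per : ∀ m ∈ Ico (0:ℝ) 1, Function.Periodic (fun u => cn u m) (4 * K m))
    (hcn_mean : ∀ m ∈ Ico (0:ℝ) 1, ∫ u in (0:ℝ)..(4 * K m), cn u m = 0)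
    (hcn_lim : ∀ u : ℝ, Tendsto (fun m => cn u m) (𝓝[>] (0:ℝ)) (𝓝 (Real.cos u)))
    (m : ℕ → ℝ) (hm : ∀ j : ℕ, m j = 1 / (j:ℝ)^2)
    (k : ℕ → ℝ → ℝ)
    (hk : ∀ j : ℕ, ∀ s : ℝ, k j s = 2 * K (m j) * cn ((j:ℝ) * K (m j) * s) (m j)) :
    (∀ g : ℝ → ℝ, MeasureTheory.MemLp g 2 (MeasureTheory.volume.restrict (Ioo (0:ℝ) 1)) →
      Tendsto (fun j : ℕ => ∫ s in (0:ℝ)..1, k j s * g s) atTop (𝓝 0)) ∧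
    Tendsto (fun j : ℕ => ∫ s in (0:ℝ)..1, (k j s)^2) atTop (𝓝 (π^2 / 2)) ∧
    (π^2 / 2 : ℝ) ≠ 0 :=
  stmt_17_general cn K hK_lim hcn_cont hcn_bdd hcn_per hcn_mean hcn_lim m hm k hk
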